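/- For every k ≥ 1, every k×k unitary matrix u, and every k×k selfadjoint complex matrix y, |u exp(2πi y) u* − exp(2πi y)|_2 ≤ 2π |u y u* − y|_2, where |c|_2 = (tr_k(c* c))^{1/2} is the normalized Hilbert–Schmidt norm and exp denotes the matrix exponential. Equivalently, |u exp(2πi y) − exp(2πi y) u|_2 ≤ 2π |u y − y u|_2. -/

import Mathlib

open Matrix Filter MeasureTheory
open scoped Matrix ENNReal

noncomputable section

instance (k : ℕ) : MeasurableSpace (Matrix (Fin k) (Fin k) ℂ) :=
  inferInstanceAs (MeasurableSpace ((Fin k) → (Fin k) → ℂ))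

/-- the normalized Hilbert–Schmidt norm `|A|₂ = (tr_k(A* A))^(1/2)` -/
def hsNorm (k : ℕ) (A : Matrix (Fin k) (Fin k) ℂ) : ℝ :=
  Real.sqrt (((Aᴴ * A).trace).re / k)

/-- the operator norm of a `k × k` complex matrix (acting on `ℓ²(Fin k)`) -/
def matOpNorm {k : ℕ} (A : Matrix (Fin k) (Fin k) ℂ) : ℝ :=
  ‖Matrix.toEuclideanCLM (𝕜 := ℂ) A‖

/-- covering number of `S` by open `ε`-balls in the normalized Hilbert–Schmidt norm -/
def covHS (k : ℕ) (S : Set (Matrix (Fin k) (Fin k) ℂ)) (ε : ℝ) : ℝ≥0∞ :=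
  sInf ((fun t : Finset (Matrix (Fin k) (Fin k) ℂ) => (t.card : ℝ≥0∞)) ''
    {t | S ⊆ ⋃ c ∈ t, {x | hsNorm k (x - c) < ε}})

/-- covering number of `S` by open `ε`-balls in the operator norm -/
def covOp (k : ℕ) (S : Set (Matrix (Fin k) (Fin k) ℂ)) (ε : ℝ) : ℝ≥0∞ :=
  sInf ((fun t : Finset (Matrix (Fin k) (Fin k) ℂ) => (t.card : ℝ≥0∞)) ''
    {t | S ⊆ ⋃ c ∈ t, {x | matOpNorm (x - c) < ε}})

/-- `y_k`: the diagonal `k × k` matrix with entries `0, 1/k, …, (k-1)/k`. -/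
def yMat (k : ℕ) : Matrix (Fin k) (Fin k) ℂ :=
  Matrix.diagonal fun i => (((i : ℕ) : ℂ) / k)

/-- the free entropy `χ(y)` of a selfadjoint element whose distribution is Lebesgue measure
on `[0,1]`: `∫₀¹∫₀¹ log |s-t| ds dt + 3/4 + (1/2) log (2π)` -/
def chiUnif : ℝ :=
  (∫ s in (0:ℝ)..1, ∫ t in (0:ℝ)..1, Real.log |s - t|) + 3/4 + (1/2) * Real.log (2 * Real.pi)

/-! In an eigenbasis `y = V D V*`, write `w = V* u V`. The `(i, j)` entry of `V* [u, f(y)] V` is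
`w i j * (f λⱼ - f λᵢ)`, so a Lipschitz bound on `f` at the eigenvalues transfers entry by entry
to the Hilbert–Schmidt norm of the commutator; `t ↦ e^{2πit}` is `2π`-Lipschitz. The conjugation
form follows from `u X u* - X = [u, X] u*` and unitary invariance of the norm. -/

theorem norm_exp_ofReal_mul_I_sub_exp_ofReal_mul_I_le (s t : ℝ) :
    ‖Complex.exp (s * Complex.I) - Complex.exp (t * Complex.I)‖ ≤ |s - t| := by
  have h : Complex.exp (s * Complex.I) - Complex.exp (t * Complex.I)
      = Complex.exp (t * Complex.I) * (Complex.exp (Complex.I * ↑(s - t)) - 1) := by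
    rw [mul_sub, mul_one, ← Complex.exp_add]; push_cast; ring_nf
  rw [h, norm_mul, Complex.norm_exp_ofReal_mul_I, one_mul, ← Real.norm_eq_abs]
  exact Real.norm_exp_I_mul_ofReal_sub_one_le

namespace Unitary

variable {R : Type*} [Ring R] [StarMul R]

theorem conj_sub_eq_commutator_mul_star {u : R} (hu : u ∈ unitary R) (x : R) :
    u * x * star u - x = (u * x - x * u) * star u := by
  rw [sub_mul, mul_assoc x, mul_star_self_of_mem hu, mul_one]

theorem commutator_conj {v : R} (hv : v ∈ unitary R) (u b : R) :
    u * (v * b * star v) - v * b * star v * u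
      = v * (star v * u * v * b - b * (star v * u * v)) * star v := by
  simp only [mul_sub, sub_mul, mul_assoc, mul_star_self_of_mem hv, mul_one]
  simp only [← mul_assoc v (star v), mul_star_self_of_mem hv, one_mul]

end Unitary

theorem Matrix.commutator_diagonal_apply {n R : Type*} [Fintype n] [DecidableEq n] [CommRing R]
    (w : Matrix n n R) (a : n → R) (i j : n) :
    (w * diagonal a - diagonal a * w) i j = w i j * (a j - a i) := by
  simp only [Matrix.sub_apply, mul_diagonal, diagonal_mul]; ring

theorem Matrix.IsHermitian.exp_smul_eq {n : Type*} [Fintype n] [DecidableEq n]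
    {y : Matrix n n ℂ} (hy : y.IsHermitian) (c : ℂ) :
    NormedSpace.exp (c • y) = (hy.eigenvectorUnitary : Matrix n n ℂ)
      * diagonal (fun j => Complex.exp (c * (hy.eigenvalues j : ℂ)))
      * star (hy.eigenvectorUnitary : Matrix n n ℂ) := by
  conv_lhs => rw [hy.spectral_theorem, Unitary.conjStarAlgAut_apply]
  set V : unitary (Matrix n n ℂ) := hy.eigenvectorUnitary
  have hinv : (V : Matrix n n ℂ)⁻¹ = star (V : Matrix n n ℂ) :=
    inv_eq_left_inv (Unitary.coe_star_mul_self V)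
  rw [← smul_mul_assoc, ← mul_smul_comm, ← hinv, Matrix.exp_conj _ _ Unitary.isUnit_coe,
    ← diagonal_smul, exp_diagonal]
  simp [Complex.exp_eq_exp_ℂ, Pi.exp_def]

section hsNorm

variable {k : ℕ}

theorem hsNorm_eq_sqrt_sum_normSq (A : Matrix (Fin k) (Fin k) ℂ) :
    hsNorm k A = √((∑ i, ∑ j, Complex.normSq (A i j)) / k) := by
  rw [hsNorm, trace, Finset.sum_comm]
  simp [mul_apply, Complex.re_sum, Complex.normSq_apply]

theorem hsNorm_mul_unitary (A : Matrix (Fin k) (Fin k) ℂ) {v : Matrix (Fin k) (Fin k) ℂ}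
    (hv : v ∈ unitaryGroup (Fin k) ℂ) : hsNorm k (A * v) = hsNorm k A := by
  rw [hsNorm, hsNorm, conjTranspose_mul, ← mul_assoc, trace_mul_cycle, ← mul_assoc v,
    ← star_eq_conjTranspose, Unitary.mul_star_self_of_mem hv, one_mul]

theorem hsNorm_unitary_mul (A : Matrix (Fin k) (Fin k) ℂ) {v : Matrix (Fin k) (Fin k) ℂ}
    (hv : v ∈ unitaryGroup (Fin k) ℂ) : hsNorm k (v * A) = hsNorm k A := by
  rw [hsNorm, hsNorm, conjTranspose_mul, mul_assoc, ← mul_assoc vᴴ, ← star_eq_conjTranspose v,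
    Unitary.star_mul_self_of_mem hv, one_mul]

theorem hsNorm_unitary_conj (A : Matrix (Fin k) (Fin k) ℂ) {v : Matrix (Fin k) (Fin k) ℂ}
    (hv : v ∈ unitaryGroup (Fin k) ℂ) : hsNorm k (v * A * star v) = hsNorm k A := by
  rw [hsNorm_mul_unitary _ (Unitary.star_mem hv), hsNorm_unitary_mul _ hv]

theorem hsNorm_commutator_diagonal_le (w : Matrix (Fin k) (Fin k) ℂ) {a b : Fin k → ℂ} {L : ℝ}
    (hL : 0 ≤ L) (hab : ∀ i j, ‖b i - b j‖ ≤ L * ‖a i - a j‖) :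
    hsNorm k (w * diagonal b - diagonal b * w)
      ≤ L * hsNorm k (w * diagonal a - diagonal a * w) := by
  have entry (i j : Fin k) : Complex.normSq (w i j * (b j - b i))
      ≤ L ^ 2 * Complex.normSq (w i j * (a j - a i)) := by
    simp only [Complex.normSq_eq_norm_sq, norm_mul, mul_pow]
    rw [mul_left_comm, ← mul_pow L]
    gcongr
    exact hab j i
  simp only [hsNorm_eq_sqrt_sum_normSq, commutator_diagonal_apply]
  rw [← Real.sqrt_sq hL, ← Real.sqrt_mul (sq_nonneg _), ← mul_div_assoc, Finset.mul_sum]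
  gcongr with i
  rw [Finset.mul_sum]
  gcongr with j
  exact entry i j

theorem hsNorm_commutator_unitary_conj_diagonal_le (u : Matrix (Fin k) (Fin k) ℂ)
    {V : Matrix (Fin k) (Fin k) ℂ} (hV : V ∈ unitaryGroup (Fin k) ℂ) {a b : Fin k → ℂ} {L : ℝ}
    (hL : 0 ≤ L) (hab : ∀ i j, ‖b i - b j‖ ≤ L * ‖a i - a j‖) :
    hsNorm k (u * (V * diagonal b * star V) - V * diagonal b * star V * u)
      ≤ L * hsNorm k (u * (V * diagonal a * star V) - V * diagonal a * star V * u) := by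
  rw [Unitary.commutator_conj hV, Unitary.commutator_conj hV, hsNorm_unitary_conj _ hV,
    hsNorm_unitary_conj _ hV]
  exact hsNorm_commutator_diagonal_le _ hL hab

end hsNorm

theorem hsNorm_exp_conj_le_general
    (k : ℕ) (u y : Matrix (Fin k) (Fin k) ℂ)
    (hu : u ∈ Matrix.unitaryGroup (Fin k) ℂ) (hy : yᴴ = y) :
    hsNorm k (u * NormedSpace.exp ((((2 * Real.pi : ℝ) : ℂ) * Complex.I) • y) * star u
        - NormedSpace.exp ((((2 * Real.pi : ℝ) : ℂ) * Complex.I) • y))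
      ≤ 2 * Real.pi * hsNorm k (u * y * star u - y) ∧
    hsNorm k (u * NormedSpace.exp ((((2 * Real.pi : ℝ) : ℂ) * Complex.I) • y)
        - NormedSpace.exp ((((2 * Real.pi : ℝ) : ℂ) * Complex.I) • y) * u)
      ≤ 2 * Real.pi * hsNorm k (u * y - y * u) := by
  have lipschitz (s t : ℝ) :
      ‖Complex.exp (((2 * Real.pi : ℝ) : ℂ) * Complex.I * s)
        - Complex.exp (((2 * Real.pi : ℝ) : ℂ) * Complex.I * t)‖ ≤ 2 * Real.pi * ‖(s : ℂ) - t‖ :=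
    calc _ = ‖Complex.exp (((2 * Real.pi * s : ℝ) : ℂ) * Complex.I)
          - Complex.exp (((2 * Real.pi * t : ℝ) : ℂ) * Complex.I)‖ := by push_cast; ring_nf
      _ ≤ |2 * Real.pi * s - 2 * Real.pi * t| := norm_exp_ofReal_mul_I_sub_exp_ofReal_mul_I_le _ _
      _ = 2 * Real.pi * ‖(s : ℂ) - t‖ := by
        rw [← mul_sub, abs_mul, abs_of_pos Real.two_pi_pos, ← Complex.ofReal_sub,
          Complex.norm_real, Real.norm_eq_abs]
  rw [Unitary.conj_sub_eq_commutator_mul_star hu, Unitary.conj_sub_eq_commutator_mul_star hu,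
    hsNorm_mul_unitary _ (Unitary.star_mem hu), hsNorm_mul_unitary _ (Unitary.star_mem hu),
    and_self]
  have hy : y.IsHermitian := hy
  rw [hy.exp_smul_eq]
  conv_rhs => rw [hy.spectral_theorem, Unitary.conjStarAlgAut_apply]
  exact hsNorm_commutator_unitary_conj_diagonal_le u hy.eigenvectorUnitary.2 Real.two_pi_pos.le
    fun i j => lipschitz _ _

/-- For a unitary `u` and a selfadjoint matrix `y`,
`|u e^{2πiy} u* − e^{2πiy}|₂ ≤ 2π |u y u* − y|₂`, and equivalently with commutators. -/
theorem hsNorm_exp_conj_le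
    (k : ℕ) (hk : 1 ≤ k) (u y : Matrix (Fin k) (Fin k) ℂ)
    (hu : u ∈ Matrix.unitaryGroup (Fin k) ℂ) (hy : yᴴ = y) :
    hsNorm k (u * NormedSpace.exp ((((2 * Real.pi : ℝ) : ℂ) * Complex.I) • y) * star u
        - NormedSpace.exp ((((2 * Real.pi : ℝ) : ℂ) * Complex.I) • y))
      ≤ 2 * Real.pi * hsNorm k (u * y * star u - y) ∧
    hsNorm k (u * NormedSpace.exp ((((2 * Real.pi : ℝ) : ℂ) * Complex.I) • y)
        - NormedSpace.exp ((((2 * Real.pi : ℝ) : ℂ) * Complex.I) • y) * u)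
      ≤ 2 * Real.pi * hsNorm k (u * y - y * u) :=
  hsNorm_exp_conj_le_general k u y hu hy
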